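/- arXiv:1104.0320 — 3 statements merged into one kernel-verified Lean document; each statement's English description precedes it below -/
import Mathlib

section
/- Let v_1, v_2, v_3 be pairwise distinct primitive vectors in ℤ^n spanning a two-dimensional subspace of ℝ^n, and let a_1, a_2, a_3 be positive integers with a_1 v_1 + a_2 v_2 + a_3 v_3 = 0. Suppose b_1, b_2, b_3 are nonnegative integers, not all zero, with b_i ≤ a_i for all i and b_1 v_1 + b_2 v_2 + b_3 v_3 = 0. If some a_i equals 1, then b_j = a_j for all j. -/
/-!
The real linear relations among `v₁, v₂, v₃` form the kernel of `x ↦ ∑ xᵢ vᵢ` on `ℝ³`, which by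
rank–nullity is a line because the `vᵢ` span a plane. Hence `b = c • a` for a real `c`; at the
index with `aᵢ = 1` this reads `c = bᵢ ∈ {0, 1}`, and `b ≠ 0` rules out `c = 0`.
-/

open Module Submodule

theorem finrank_ker_fintypeLinearCombination_add_finrank_span {K M ι : Type*} [Field K]
    [AddCommGroup M] [Module K M] [Fintype ι] (V : ι → M) :
    finrank K (LinearMap.ker (Fintype.linearCombination K V)) + finrank K (span K (Set.range V)) =
      Fintype.card ι := by
  rw [← Fintype.range_linearCombination, add_comm, LinearMap.finrank_range_add_finrank_ker,
    finrank_fintype_fun_eq_card]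

theorem Submodule.exists_smul_eq_of_finrank_eq_one {K M : Type*} [Field K] [AddCommGroup M]
    [Module K M] {W : Submodule K M} (hW : finrank K W = 1) {x y : M} (hx : x ∈ W)
    (hx0 : x ≠ 0) (hy : y ∈ W) : ∃ c : K, c • x = y := by
  obtain ⟨c, hc⟩ :=
    (finrank_eq_one_iff_of_nonzero' (⟨x, hx⟩ : W) (by simpa using hx0)).mp hW ⟨y, hy⟩
  exact ⟨c, congrArg Subtype.val hc⟩

theorem intCast_mem_ker_fintypeLinearCombination {ι κ R : Type*} [Fintype ι] [CommRing R]
    (v : ι → κ → ℤ) {c : ι → ℤ} (hc : ∑ i, c i • v i = 0) :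
    (fun i => (c i : R)) ∈ LinearMap.ker (Fintype.linearCombination R fun i k => (v i k : R)) := by
  rw [LinearMap.mem_ker, Fintype.linearCombination_apply]
  funext k
  simpa using congrArg (Int.cast : ℤ → R) (congrFun hc k)

theorem eq_of_natCast_eq_smul_of_eq_one {ι R : Type*} [Semiring R] [CharZero R] {a b : ι → ℕ}
    {c : R} (hc : c • (fun j => (a j : R)) = fun j => (b j : R)) (hb : b ≠ 0) {i : ι}
    (hi : a i = 1) (hbi : b i ≤ 1) : b = a := by
  have hba : ∀ j, b j = b i * a j := by
    have hci : c = b i := by simpa [hi] using congrFun hc i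
    intro j
    have hj := congrFun hc j
    simp only [hci, Pi.smul_apply, smul_eq_mul] at hj
    exact_mod_cast hj.symm
  obtain hbi0 | hbi1 : b i = 0 ∨ b i = 1 := by omega
  · exact absurd (funext fun j => by simp [hba j, hbi0]) hb
  · exact funext fun j => by simp [hba j, hbi1]

theorem trivalent_multiplicity_one_general
    {n : ℕ} (v : Fin 3 → (Fin n → ℤ))
    (hspan : Module.finrank ℝ
      ↥(Submodule.span ℝ (Set.range (fun i => fun k => ((v i k : ℝ))))) = 2)
    (a : Fin 3 → ℕ)
    (hrel : ∑ i, (a i : ℤ) • v i = 0)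
    (b : Fin 3 → ℕ) (hb : b ≠ 0) (hba : ∀ i, b i ≤ a i)
    (hrelb : ∑ i, (b i : ℤ) • v i = 0)
    (hone : ∃ i, a i = 1) :
    ∀ j, b j = a j := by
  obtain ⟨i, hi⟩ := hone
  have hline : finrank ℝ (LinearMap.ker
      (Fintype.linearCombination ℝ fun i k => (v i k : ℝ))) = 1 := by
    have := finrank_ker_fintypeLinearCombination_add_finrank_span (K := ℝ)
      fun i k => (v i k : ℝ)
    rw [hspan, Fintype.card_fin] at this
    omega
  have ha0 : (fun j => (a j : ℝ)) ≠ 0 := fun h => by simpa [hi] using congrFun h i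
  obtain ⟨c, hc⟩ := exists_smul_eq_of_finrank_eq_one hline
    (by simpa using intCast_mem_ker_fintypeLinearCombination (R := ℝ) v hrel) ha0
    (by simpa using intCast_mem_ker_fintypeLinearCombination (R := ℝ) v hrelb)
  exact congrFun (eq_of_natCast_eq_smul_of_eq_one hc hb hi (hi ▸ hba i))

/-- Trivalent vertex with an adjacent edge of multiplicity one has
multiplicity one (combinatorial core): let `v₁, v₂, v₃ ∈ ℤ^n` be pairwise
distinct primitive vectors spanning a two-dimensional subspace of `ℝ^n`, and
let `a₁ v₁ + a₂ v₂ + a₃ v₃ = 0` with `aᵢ` positive integers.  If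
`b₁ v₁ + b₂ v₂ + b₃ v₃ = 0` with `bᵢ` nonnegative integers not all zero and
`bᵢ ≤ aᵢ`, and some `aᵢ = 1`, then `b = a`. -/
theorem trivalent_multiplicity_one
    {n : ℕ} (v : Fin 3 → (Fin n → ℤ))
    (hprim : ∀ i, Finset.univ.gcd (v i) = 1)
    (hinj : Function.Injective v)
    (hspan : Module.finrank ℝ
      ↥(Submodule.span ℝ (Set.range (fun i => fun k => ((v i k : ℝ))))) = 2)
    (a : Fin 3 → ℕ) (ha : ∀ i, 0 < a i)
    (hrel : ∑ i, (a i : ℤ) • v i = 0)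
    (b : Fin 3 → ℕ) (hb : b ≠ 0) (hba : ∀ i, b i ≤ a i)
    (hrelb : ∑ i, (b i : ℤ) • v i = 0)
    (hone : ∃ i, a i = 1) :
    ∀ j, b j = a j :=
  trivalent_multiplicity_one_general v hspan a hrel b hb hba hrelb hone
end

section
/- Let P ⊆ ℝ^n be a nonempty polyhedron (finite intersection of closed halfspaces) that contains no affine line, and let ℓ : ℝ^n → ℝ be a linear functional that is bounded below on P. Then the infimum of ℓ over P is attained at an extreme point (vertex) of P. -/
/-!
At a point `v` of `P`, let `activeKer v` be the space of directions that keep every constraint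
active at `v` active. If it is nonzero, it contains a direction `e` with `ℓ e ≤ 0` along which
some constraint decreases: otherwise a nonzero direction of `activeKer v` or its negative would
be a recession direction of `P` on which `ℓ` is negative, or would span a line in `P`. Moving
along `e` until a new constraint becomes active does not increase `ℓ` and strictly shrinks
`activeKer`. Hence every point of `P` is dominated by a point with `activeKer = ⊥`; such points
are extreme, and, being determined by their active constraints, finitely many. The best of them
is a minimizer.
-/

open Set

theorem eq_of_le_of_mem_openSegment {c p q : ℝ} (hp : c ≤ p) (hq : c ≤ q)
    (hc : c ∈ openSegment ℝ p q) : p = c := by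
  obtain ⟨s, t, hs, ht, hst, rfl⟩ := hc
  obtain rfl : t = 1 - s := by linarith
  simp only [smul_eq_mul] at hp hq ⊢
  obtain rfl : p = q := by nlinarith
  ring

section Polyhedron

variable {ι E : Type*} [AddCommGroup E] [Module ℝ E]

def polyhedron (g : ι → E →ₗ[ℝ] ℝ) (a : ι → ℝ) : Set E := {v | ∀ i, a i ≤ g i v}

def activeKer (g : ι → E →ₗ[ℝ] ℝ) (a : ι → ℝ) (v : E) : Submodule ℝ E :=
  ⨅ (i) (_ : g i v = a i), LinearMap.ker (g i)

def basicPoints (g : ι → E →ₗ[ℝ] ℝ) (a : ι → ℝ) : Set E :=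
  {v ∈ polyhedron g a | activeKer g a v = ⊥}

variable {g : ι → E →ₗ[ℝ] ℝ} {a : ι → ℝ} {ℓ : E →ₗ[ℝ] ℝ} {v e : E}

theorem mem_activeKer {d : E} : d ∈ activeKer g a v ↔ ∀ i, g i v = a i → g i d = 0 := by
  simp [activeKer, Submodule.mem_iInf]

theorem mem_extremePoints_of_activeKer_eq_bot (hv : v ∈ polyhedron g a)
    (hK : activeKer g a v = ⊥) : v ∈ (polyhedron g a).extremePoints ℝ := by
  refine ⟨hv, fun x hx y hy hxy => ?_⟩
  have hxv : x - v ∈ activeKer g a v := mem_activeKer.2 fun i hi => by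
    have hixy : g i v ∈ openSegment ℝ (g i x) (g i y) := by
      simpa using image_openSegment ℝ (g i).toAffineMap x y ▸ mem_image_of_mem _ hxy
    rw [hi] at hixy
    simp [eq_of_le_of_mem_openSegment (hx i) (hy i) hixy, hi]
  rwa [hK, Submodule.mem_bot, sub_eq_zero] at hxv

theorem finite_basicPoints [Finite ι] : (basicPoints g a).Finite := by
  refine Finite.of_finite_image (f := fun v => {i | g i v = a i}) (toFinite _) ?_
  rintro x ⟨-, hx⟩ y - hxy
  have hxy : x - y ∈ activeKer g a x := mem_activeKer.2 fun i hi => by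
    have hi' : g i y = a i := (Set.ext_iff.1 hxy i).1 hi
    simp [hi, hi']
  rwa [hx, Submodule.mem_bot, sub_eq_zero] at hxy

theorem add_smul_mem_polyhedron (hv : v ∈ polyhedron g a) (he : ∀ i, 0 ≤ g i e) {t : ℝ}
    (ht : 0 ≤ t) : v + t • e ∈ polyhedron g a := fun i => by
  simpa using add_le_add (hv i) (mul_nonneg ht (he i))

theorem map_nonneg_of_bddBelow (hbdd : BddBelow (ℓ '' polyhedron g a))
    (hv : v ∈ polyhedron g a) (he : ∀ i, 0 ≤ g i e) : 0 ≤ ℓ e := by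
  obtain ⟨c, hc⟩ := hbdd
  by_contra! hneg
  have hcv : c ≤ ℓ v := hc (mem_image_of_mem ℓ hv)
  obtain ⟨t, ht0, ht⟩ : ∃ t : ℝ, 0 ≤ t ∧ ℓ v - c < t * -ℓ e :=
    ⟨(ℓ v - c + 1) / -ℓ e, div_nonneg (by linarith) (by linarith),
      by rw [div_mul_cancel₀ _ (by linarith)]; linarith⟩
  have hct := hc (mem_image_of_mem ℓ (add_smul_mem_polyhedron hv he ht0))
  simp only [map_add, map_smul, smul_eq_mul] at hct
  linarith

theorem exists_descent_direction (hker : ∀ d, (∀ i, g i d = 0) → d = 0)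
    (hbdd : BddBelow (ℓ '' polyhedron g a)) (hv : v ∈ polyhedron g a) {d : E}
    (hd : d ∈ activeKer g a v) (hd0 : d ≠ 0) :
    ∃ e ∈ activeKer g a v, ℓ e ≤ 0 ∧ ∃ j, g j e < 0 := by
  wlog hℓ : ℓ d ≤ 0 generalizing d
  · exact this (neg_mem hd) (neg_ne_zero.2 hd0) (by simp only [map_neg]; linarith)
  by_cases hj : ∃ j, g j d < 0
  · exact ⟨d, hd, hℓ, hj⟩
  push Not at hj
  -- `d` is now a recession direction, so `ℓ d = 0`; some constraint strictly decreases along `-d`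
  obtain ⟨j, hj0⟩ : ∃ j, g j d ≠ 0 := by
    by_contra! h
    exact hd0 (hker d h)
  refine ⟨-d, neg_mem hd, ?_, j, ?_⟩
  · simpa using map_nonneg_of_bddBelow hbdd hv hj
  · simpa using (hj j).lt_of_ne' hj0

theorem activeKer_add_smul_le (he : e ∈ activeKer g a v) (t : ℝ) :
    activeKer g a (v + t • e) ≤ activeKer g a v := fun d hd => by
  rw [mem_activeKer] at hd ⊢
  exact fun i hi => hd i (by simp [hi, mem_activeKer.1 he i hi])

theorem exists_add_smul_mem_polyhedron_activeKer_lt [Finite ι] (hv : v ∈ polyhedron g a)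
    (he : e ∈ activeKer g a v) {j : ι} (hj : g j e < 0) :
    ∃ t : ℝ, 0 ≤ t ∧ v + t • e ∈ polyhedron g a ∧
      activeKer g a (v + t • e) < activeKer g a v := by
  -- ratio test: move until the first constraint decreasing along `e` becomes active
  obtain ⟨k, hk, hmin⟩ := exists_min_image {j | g j e < 0}
    (fun j => (g j v - a j) / -g j e) (toFinite _) ⟨j, hj⟩
  set t := (g k v - a k) / -g k e
  have hk : g k e < 0 := hk
  have ht : 0 ≤ t := div_nonneg (sub_nonneg.2 (hv k)) (by linarith)
  have hkt : g k (v + t • e) = a k := by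
    have : t * -g k e = g k v - a k := div_mul_cancel₀ _ (by linarith)
    simp only [map_add, map_smul, smul_eq_mul]
    linarith
  refine ⟨t, ht, fun i => ?_, (activeKer_add_smul_le he t).lt_of_ne fun h => ?_⟩
  · simp only [map_add, map_smul, smul_eq_mul]
    rcases lt_or_ge (g i e) 0 with hi | hi
    · linarith [hv i, (le_div_iff₀ (neg_pos.2 hi)).1 (hmin i hi)]
    · linarith [hv i, mul_nonneg ht hi]
  · linarith [mem_activeKer.1 (h ▸ he) k hkt]

theorem exists_mem_basicPoints_le [Finite ι] [FiniteDimensional ℝ E]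
    (hker : ∀ d, (∀ i, g i d = 0) → d = 0) (hbdd : BddBelow (ℓ '' polyhedron g a))
    (hv : v ∈ polyhedron g a) : ∃ w ∈ basicPoints g a, ℓ w ≤ ℓ v := by
  induction hK : activeKer g a v using WellFoundedLT.induction generalizing v with
  | _ K ih =>
    subst hK
    by_cases hbot : activeKer g a v = ⊥
    · exact ⟨v, ⟨hv, hbot⟩, le_rfl⟩
    obtain ⟨d, hd, hd0⟩ := Submodule.exists_mem_ne_zero_of_ne_bot hbot
    obtain ⟨e, he, hℓe, j, hj⟩ := exists_descent_direction hker hbdd hv hd hd0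
    obtain ⟨t, ht, hvt, hlt⟩ := exists_add_smul_mem_polyhedron_activeKer_lt hv he hj
    obtain ⟨w, hw, hwℓ⟩ := ih _ hlt hvt rfl
    refine ⟨w, hw, hwℓ.trans ?_⟩
    simp only [map_add, map_smul, smul_eq_mul]
    nlinarith

theorem exists_mem_extremePoints_forall_le [Finite ι] [FiniteDimensional ℝ E]
    (hne : (polyhedron g a).Nonempty) (hker : ∀ d, (∀ i, g i d = 0) → d = 0)
    (hbdd : BddBelow (ℓ '' polyhedron g a)) :
    ∃ w ∈ (polyhedron g a).extremePoints ℝ, ∀ v ∈ polyhedron g a, ℓ w ≤ ℓ v := by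
  obtain ⟨v₀, hv₀⟩ := hne
  obtain ⟨w₀, hw₀, -⟩ := exists_mem_basicPoints_le hker hbdd hv₀
  obtain ⟨w, hw, hmin⟩ := exists_min_image _ ℓ finite_basicPoints ⟨w₀, hw₀⟩
  refine ⟨w, mem_extremePoints_of_activeKer_eq_bot hw.1 hw.2, fun v hv => ?_⟩
  obtain ⟨w', hw', hle⟩ := exists_mem_basicPoints_le hker hbdd hv
  exact (hmin w' hw').trans hle

end Polyhedron

/-- Let `P ⊆ ℝ^n` be a nonempty polyhedron (finite intersection of closed
halfspaces) containing no affine line, and let `ℓ` be a linear functional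
bounded below on `P`.  Then the infimum of `ℓ` over `P` is attained at an
extreme point (vertex) of `P`. -/
theorem linear_functional_attains_min_at_extreme_point
    {n r : ℕ} (u : Fin r → (Fin n → ℝ)) (a : Fin r → ℝ)
    (P : Set (Fin n → ℝ))
    (hP : P = {v | ∀ i, a i ≤ ∑ k, u i k * v k})
    (hne : P.Nonempty)
    (hline : ¬ ∃ v ∈ P, ∃ d : Fin n → ℝ, d ≠ 0 ∧ ∀ t : ℝ, (v + t • d) ∈ P)
    (ℓ : (Fin n → ℝ) →ₗ[ℝ] ℝ)
    (hbdd : BddBelow (ℓ '' P)) :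
    ∃ w ∈ Set.extremePoints ℝ P, ∀ v ∈ P, ℓ w ≤ ℓ v := by
  let g (i : Fin r) : (Fin n → ℝ) →ₗ[ℝ] ℝ := dotProductBilin ℝ ℝ (u i)
  obtain rfl : P = polyhedron g a := hP
  refine exists_mem_extremePoints_forall_le hne (fun d hd => ?_) hbdd
  by_contra hd0
  obtain ⟨v, hv⟩ := hne
  exact hline ⟨v, hv, d, hd0, fun t i => by simpa [hd i] using hv i⟩
end

section
/- Let P ⊆ ℝ^n be a nonempty polyhedron. Then the recession cone σ_P = {d : ∀ w ∈ P, w + d ∈ P} equals the intersection of ℝ^n × {0} with the closure in ℝ^n × ℝ of the cone {(λ v, λ) : v ∈ P, λ ≥ 0} spanned by P × {1}. -/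
/-!
If `w ∈ P` and `d` is a recession direction, then `w + m • d ∈ P` for all `m`, and rescaling
these points by `1 / m` gives points of the homogenization tending to `(d, 0)`. Conversely, each
inequality `a ≤ f v` defining `P` homogenizes to the closed condition `a * t ≤ f x` on `(x, t)`,
which holds on the closure of the homogenization; at `(d, 0)` it reads `0 ≤ f d`, which is
exactly what `d` needs to be a recession direction.
-/

open Filter Topology

namespace Set

variable {E : Type*} [AddCommMonoid E]

def recessionCone (P : Set E) : Set E := {d | ∀ w ∈ P, w + d ∈ P}

theorem add_nsmul_mem_of_mem_recessionCone {P : Set E} {d w : E}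
    (hd : d ∈ P.recessionCone) (hw : w ∈ P) (m : ℕ) : w + m • d ∈ P := by
  induction m with
  | zero => simpa using hw
  | succ m ih => simpa [succ_nsmul, add_assoc] using hd _ ih

variable [Module ℝ E]

def homogenization (P : Set E) : Set (E × ℝ) :=
  {p | ∃ v ∈ P, ∃ lam : ℝ, 0 ≤ lam ∧ p = (lam • v, lam)}

theorem mk_zero_mem_closure_homogenization [TopologicalSpace E] [ContinuousAdd E]
    [ContinuousSMul ℝ E] {P : Set E} (hP : P.Nonempty) {d : E}
    (hd : d ∈ P.recessionCone) : (d, (0 : ℝ)) ∈ closure P.homogenization := by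
  obtain ⟨w, hw⟩ := hP
  have hlam : Tendsto (fun m : ℕ => ((m : ℝ) + 1)⁻¹) atTop (𝓝 0) :=
    tendsto_one_div_add_atTop_nhds_zero_nat.congr fun m => one_div _
  have hpt : Tendsto (fun m : ℕ => ((m : ℝ) + 1)⁻¹ • w + d) atTop (𝓝 d) := by
    simpa using (hlam.smul_const w).add_const d
  refine mem_closure_of_tendsto (hpt.prodMk_nhds hlam) (Eventually.of_forall fun m => ?_)
  have hm : ((m : ℝ) + 1) ≠ 0 := by positivity
  refine ⟨w + (m + 1) • d, add_nsmul_mem_of_mem_recessionCone hd hw _, ((m : ℝ) + 1)⁻¹,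
    by positivity, ?_⟩
  simp [smul_add, ← Nat.cast_smul_eq_nsmul ℝ, smul_smul, hm]

variable [TopologicalSpace E] {ι : Type*} (f : ι → E →L[ℝ] ℝ) (a : ι → ℝ)

theorem closure_homogenization_subset :
    closure (homogenization {v | ∀ i, a i ≤ f i v}) ⊆ {p | ∀ i, a i * p.2 ≤ f i p.1} := by
  have hclosed : IsClosed {p : E × ℝ | ∀ i, a i * p.2 ≤ f i p.1} := by
    simp only [ofPred_forall]
    exact isClosed_iInter fun i => isClosed_le (by fun_prop) (by fun_prop)
  refine closure_minimal ?_ hclosed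
  rintro _ ⟨v, hv, lam, hlam, rfl⟩ i
  simpa [mul_comm] using mul_le_mul_of_nonneg_left (hv i) hlam

theorem mem_recessionCone_of_forall_nonneg {d : E} (hd : ∀ i, 0 ≤ f i d) :
    d ∈ recessionCone {v | ∀ i, a i ≤ f i v} := fun w hw i => by
  simpa using add_le_add (hw i) (hd i)

theorem recessionCone_eq_of_polyhedron [ContinuousAdd E] [ContinuousSMul ℝ E]
    (hne : {v | ∀ i, a i ≤ f i v}.Nonempty) :
    recessionCone {v | ∀ i, a i ≤ f i v} =
      {d | (d, (0 : ℝ)) ∈ closure (homogenization {v | ∀ i, a i ≤ f i v})} := by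
  refine subset_antisymm (fun d hd => mk_zero_mem_closure_homogenization hne hd) fun d hd => ?_
  refine mem_recessionCone_of_forall_nonneg f a fun i => ?_
  simpa using closure_homogenization_subset f a hd i

end Set

/-- Let `P ⊆ ℝ^n` be a nonempty polyhedron.  Then the recession cone
`σ_P = {d : ∀ w ∈ P, w + d ∈ P}` equals the intersection of `ℝ^n × {0}`
with the closure in `ℝ^n × ℝ` of the cone `{(λv, λ) : v ∈ P, λ ≥ 0}`
spanned by `P × {1}`. -/
theorem recession_cone_eq_cone_at_infinity
    {n r : ℕ} (u : Fin r → (Fin n → ℝ)) (a : Fin r → ℝ)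
    (P : Set (Fin n → ℝ))
    (hP : P = {v | ∀ i, a i ≤ ∑ k, u i k * v k})
    (hne : P.Nonempty) :
    {d : Fin n → ℝ | ∀ w ∈ P, w + d ∈ P} =
      {d : Fin n → ℝ |
        ((d, (0 : ℝ)) ∈ closure
          {p : (Fin n → ℝ) × ℝ | ∃ v ∈ P, ∃ lam : ℝ, 0 ≤ lam ∧
            p = (lam • v, lam)})} := by
  subst hP
  -- `dotProductBilin ℝ ℝ (u i) v` unfolds to `∑ k, u i k * v k`, so the sets match definitionally.
  exact Set.recessionCone_eq_of_polyhedron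
    (fun i => LinearMap.toContinuousLinearMap (dotProductBilin ℝ ℝ (u i))) a hne
end
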